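/- Let g be the 19-uniform morphism on {0,1,2} defined by g(0) = 0120212012102120210, g(1) = 1201020120210201021, g(2) = 2012101201021012102 (a renaming of Dejean's morphism). For every n ≥ 1, the word g^n(0) is a palindrome of length 19^n that contains no factor of length p with period q satisfying p/q > 7/4. -/

import Mathlib

/-- A word `x` has period `q` (with `1 ≤ q ≤ |x|`) if `x[i] = x[i+q]`
whenever both indices are in range. -/
def HasPeriod {A : Type*} (x : List A) (q : ℕ) : Prop :=
  1 ≤ q ∧ q ≤ x.length ∧ ∀ i : ℕ, i + q < x.length → x[i]? = x[i + q]?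

/-- `w` contains an `e`-power: a nonempty factor of length `p` with period `q`
and `p/q ≥ e`. -/
def ContainsPowGe {A : Type*} (w : List A) (e : ℚ) : Prop :=
  ∃ x : List A, ∃ q : ℕ, x ≠ [] ∧ x <:+: w ∧ HasPeriod x q ∧
    e ≤ (x.length : ℚ) / (q : ℚ)

/-- `w` contains an `e⁺`-power: a nonempty factor of length `p` with period `q`
and `p/q > e`. -/
def ContainsPowGt {A : Type*} (w : List A) (e : ℚ) : Prop :=
  ∃ x : List A, ∃ q : ℕ, x ≠ [] ∧ x <:+: w ∧ HasPeriod x q ∧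
    e < (x.length : ℚ) / (q : ℚ)

/-- The critical exponent of `w` is exactly `e`: some nonempty factor has
exponent at least `e`, and no nonempty factor has exponent exceeding `e`. -/
def CritExpIs {A : Type*} (w : List A) (e : ℚ) : Prop :=
  ContainsPowGe w e ∧ ¬ ContainsPowGt w e

/-- Dejean's 19-uniform morphism on {0,1,2} (up to renaming of letters). -/
def dejean : List (Fin 3) → List (Fin 3) :=
  fun w => w.flatMap (fun a =>
    if a = 0 then [0, 1, 2, 0, 2, 1, 2, 0, 1, 2, 1, 0, 2, 1, 2, 0, 2, 1, 0]
    else if a = 1 then [1, 2, 0, 1, 0, 2, 0, 1, 2, 0, 2, 1, 0, 2, 0, 1, 0, 2, 1]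
    else [2, 0, 1, 2, 1, 0, 1, 2, 0, 1, 0, 2, 1, 0, 1, 2, 1, 0, 2])

/-!
Write `d = g(0)`. Every image is a letterwise shift, `g(a) = d + a`, so the `t`-th letter of `g(w)`
is `d[t mod 19] + w[t / 19]`; as `d` is a palindrome, `g` commutes with reversal.

For `(7/4)⁺`-freeness we induct on `n`, carrying along that every factor of length at most 4
belongs to an explicit list of 40 words, a list that `g` maps into itself. Let a factor of `g(w)`
have period `q` and exponent `> 7/4`. If `19 ∣ q`, the letters of `w` under the factor repeat
with period `q / 19`, giving a `(7/4)⁺`-power in `w`. Otherwise, the difference of two consecutive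
letters inside one block of `g(w)` depends only on `d`, and no nonzero cyclic shift of the
difference sequence of `d` agrees with it on 9 consecutive positions; so the factor is shorter
than `q + 10`, which forces `q ≤ 11`. Such a factor lies in the image of a factor of `w` of length
at most 2, and these images are checked by computation.
-/

/-- The factor `(l.drop s).take p` of `l` is in range and has period `q`; unlike `HasPeriod`, no
bound relates `q` and `p`. -/
def PeriodicWindow {A : Type*} (l : List A) (s p q : ℕ) : Prop :=
  s + p ≤ l.length ∧ ∀ t, s ≤ t → t + q < s + p → l[t]? = l[t + q]?

theorem List.drop_take_infix {A : Type*} (l : List A) (k m : ℕ) : (l.drop k).take m <:+: l :=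
  ((l.drop k).take_prefix m).isInfix.trans (l.drop_suffix k).isInfix

theorem List.take_drop_take_drop {A : Type*} (l : List A) {a b s L : ℕ} (ha : a ≤ s)
    (hb : s + L ≤ a + b) : (((l.drop a).take b).drop (s - a)).take L = (l.drop s).take L := by
  rw [List.drop_take, List.drop_drop, List.take_take, Nat.add_sub_cancel' ha,
    Nat.min_eq_left (by omega)]

theorem PeriodicWindow.drop_take {A : Type*} {l : List A} {s p q : ℕ}
    (h : PeriodicWindow l s p q) {a b : ℕ} (ha : a ≤ s) (hb : s + p ≤ a + b) :
    PeriodicWindow ((l.drop a).take b) (s - a) p q := by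
  refine ⟨by have := h.1; simp only [List.length_take, List.length_drop]; omega, ?_⟩
  intro t hs ht
  rw [List.getElem?_take, if_pos (by omega), List.getElem?_take, if_pos (by omega),
    List.getElem?_drop, List.getElem?_drop, ← Nat.add_assoc]
  exact h.2 (a + t) (by omega) (by omega)

theorem containsPowGt_iff_exists_periodicWindow {A : Type*} (w : List A) (e : ℚ) :
    ContainsPowGt w e ↔
      ∃ s p q : ℕ, 0 < p ∧ 0 < q ∧ q ≤ p ∧ e * q < p ∧ PeriodicWindow w s p q := by
  constructor
  · rintro ⟨x, q, hx, ⟨pre, post, rfl⟩, ⟨hq, hqx, hper⟩, he⟩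
    refine ⟨pre.length, x.length, q, List.length_pos_iff.mpr hx, hq, hqx,
      (lt_div_iff₀ (by exact_mod_cast hq)).mp he, by simp, fun t hs ht => ?_⟩
    have hget : ∀ i < x.length, (pre ++ x ++ post)[pre.length + i]? = x[i]? := fun i hi => by
      rw [List.append_assoc, List.getElem?_append_right (by omega), Nat.add_sub_cancel_left,
        List.getElem?_append_left hi]
    obtain ⟨i, rfl⟩ := Nat.exists_eq_add_of_le hs
    rw [hget i (by omega), Nat.add_assoc, hget (i + q) (by omega)]
    exact hper i (by omega)
  · rintro ⟨s, p, q, hp, hq, hqp, he, hlen, hper⟩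
    have hlenx : ((w.drop s).take p).length = p := by
      simp only [List.length_take, List.length_drop]; omega
    refine ⟨(w.drop s).take p, q, List.ne_nil_of_length_pos (by omega), w.drop_take_infix s p,
      ⟨hq, by omega, fun i hi => ?_⟩, by rwa [hlenx, lt_div_iff₀ (by exact_mod_cast hq)]⟩
    rw [hlenx] at hi
    rw [List.getElem?_take, if_pos (by omega), List.getElem?_take, if_pos (by omega),
      List.getElem?_drop, List.getElem?_drop, ← Nat.add_assoc]
    exact hper (s + i) (by omega) (by omega)

theorem containsPowGt_seven_fourths_iff {A : Type*} (w : List A) :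
    ContainsPowGt w (7 / 4) ↔
      ∃ s p q : ℕ, 0 < q ∧ 7 * q < 4 * p ∧ PeriodicWindow w s p q := by
  rw [containsPowGt_iff_exists_periodicWindow]
  constructor
  · rintro ⟨s, p, q, -, hq, -, he, h⟩
    exact ⟨s, p, q, hq, by exact_mod_cast (by linarith : (7 * q : ℚ) < 4 * p), h⟩
  · rintro ⟨s, p, q, hq, he, h⟩
    have he' : (7 * q : ℚ) < 4 * p := by exact_mod_cast he
    exact ⟨s, p, q, by omega, hq, by omega, by linarith, h⟩

theorem not_containsPowGt_singleton {A : Type*} (a : A) {e : ℚ} (he : 1 ≤ e) :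
    ¬ ContainsPowGt [a] e := by
  rw [containsPowGt_iff_exists_periodicWindow]
  rintro ⟨s, p, q, hp, hq, hqp, hlt, hlen, -⟩
  have hp1 : p = 1 := by simp only [List.length_singleton] at hlen; omega
  have hq1 : q = 1 := by omega
  subst hp1 hq1
  norm_num at hlt
  linarith

def dejeanBlock : List (Fin 3) := [0, 1, 2, 0, 2, 1, 2, 0, 1, 2, 1, 0, 2, 1, 2, 0, 2, 1, 0]

theorem dejean_singleton (a : Fin 3) : dejean [a] = dejeanBlock.map (· + a) := by
  fin_cases a <;> rfl

theorem length_dejean_singleton (a : Fin 3) : (dejean [a]).length = 19 := by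
  fin_cases a <;> rfl

theorem reverse_dejeanBlock : dejeanBlock.reverse = dejeanBlock := rfl

theorem dejean_append (u v : List (Fin 3)) : dejean (u ++ v) = dejean u ++ dejean v :=
  List.flatMap_append

theorem dejean_cons (a : Fin 3) (w : List (Fin 3)) : dejean (a :: w) = dejean [a] ++ dejean w :=
  dejean_append [a] w

theorem length_dejean (w : List (Fin 3)) : (dejean w).length = 19 * w.length := by
  induction w with
  | nil => rfl
  | cons a w ih =>
    rw [dejean_cons, List.length_append, ih, length_dejean_singleton, List.length_cons]
    ring

theorem reverse_dejean (w : List (Fin 3)) : (dejean w).reverse = dejean w.reverse := by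
  induction w with
  | nil => rfl
  | cons a w ih =>
    rw [dejean_cons, List.reverse_append, ih, List.reverse_cons, dejean_append, dejean_singleton,
      ← List.map_reverse, reverse_dejeanBlock]

theorem getElem?_dejean (w : List (Fin 3)) {u : ℕ} (hu : u < 19) (b : ℕ) :
    (dejean w)[19 * b + u]? = w[b]?.map (dejeanBlock.getD u 0 + ·) := by
  induction w generalizing b with
  | nil => rfl
  | cons a w ih =>
    rw [dejean_cons]
    cases b with
    | zero =>
      rw [Nat.mul_zero, Nat.zero_add,
        List.getElem?_append_left (by rw [length_dejean_singleton]; exact hu), dejean_singleton,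
        List.getElem?_map, List.getElem?_eq_getElem (by exact hu),
        List.getD_eq_getElem _ _ (by exact hu)]
      rfl
    | succ b =>
      rw [List.getElem?_append_right (by rw [length_dejean_singleton]; omega),
        length_dejean_singleton, show 19 * (b + 1) + u - 19 = 19 * b + u by omega, ih,
        List.getElem?_cons_succ]

theorem dejean_drop (w : List (Fin 3)) (j : ℕ) :
    dejean (w.drop j) = (dejean w).drop (19 * j) := by
  induction w generalizing j with
  | nil => simp [dejean]
  | cons a w ih =>
    cases j with
    | zero => rfl
    | succ j =>
      rw [List.drop_succ_cons, ih, dejean_cons, Nat.mul_succ, Nat.add_comm, ← List.drop_drop,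
        List.drop_left' (length_dejean_singleton a)]

theorem dejean_take (w : List (Fin 3)) (m : ℕ) :
    dejean (w.take m) = (dejean w).take (19 * m) := by
  induction w generalizing m with
  | nil => simp [dejean]
  | cons a w ih =>
    cases m with
    | zero => rfl
    | succ m =>
      rw [List.take_succ_cons, dejean_cons, ih, dejean_cons a w, Nat.mul_succ, Nat.add_comm,
        List.take_append, length_dejean_singleton, Nat.add_sub_cancel_left,
        List.take_of_length_le (l := dejean [a]) (by rw [length_dejean_singleton]; omega)]

theorem dejean_drop_take (w : List (Fin 3)) (j m : ℕ) :
    dejean ((w.drop j).take m) = ((dejean w).drop (19 * j)).take (19 * m) := by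
  rw [dejean_take, dejean_drop]

theorem PeriodicWindow.dejean_letter_eq {w : List (Fin 3)} {s p q : ℕ}
    (h : PeriodicWindow (dejean w) s p q) {b u b' u' : ℕ} (hu : u < 19) (hu' : u' < 19)
    (hs : s ≤ 19 * b + u) (hq : 19 * b + u + q = 19 * b' + u') (hp : 19 * b' + u' < s + p) :
    dejeanBlock.getD u 0 + w.getD b 0 = dejeanBlock.getD u' 0 + w.getD b' 0 := by
  have hlen := h.1
  rw [length_dejean] at hlen
  have hb : b < w.length := by omega
  have hb' : b' < w.length := by omega
  have := h.2 (19 * b + u) hs (by omega)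
  rw [hq, getElem?_dejean w hu, getElem?_dejean w hu', List.getElem?_eq_getElem hb,
    List.getElem?_eq_getElem hb', Option.map_some, Option.map_some, Option.some_inj] at this
  rwa [List.getD_eq_getElem _ _ hb, List.getD_eq_getElem _ _ hb']

theorem PeriodicWindow.of_dejean {w : List (Fin 3)} {s p q : ℕ}
    (h : PeriodicWindow (dejean w) s p q) (hqp : q < p) (hq : 19 ∣ q) :
    PeriodicWindow w (s / 19) ((s + p + 18) / 19 - s / 19) (q / 19) := by
  have hlen := h.1
  rw [length_dejean] at hlen
  refine ⟨by omega, fun i hs ht => ?_⟩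
  have h1 : i < w.length := by omega
  have h2 : i + q / 19 < w.length := by omega
  have heq := h.dejean_letter_eq (b := i) (u := max (19 * i) s - 19 * i) (b' := i + q / 19)
    (u' := max (19 * i) s - 19 * i) (by omega) (by omega) (by omega) (by omega) (by omega)
  rw [add_left_cancel_iff, List.getD_eq_getElem _ _ h1, List.getD_eq_getElem _ _ h2] at heq
  rw [List.getElem?_eq_getElem h1, List.getElem?_eq_getElem h2, heq]

theorem exists_dejeanBlock_step_ne : ∀ r < 19, r ≠ 0 → ∀ c < 19, ∃ j < 9,
    (c + j) % 19 ≠ 18 ∧ (c + j + r) % 19 ≠ 18 ∧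
    dejeanBlock.getD ((c + j) % 19 + 1) 0 - dejeanBlock.getD ((c + j) % 19) 0 ≠
      dejeanBlock.getD ((c + j + r) % 19 + 1) 0 - dejeanBlock.getD ((c + j + r) % 19) 0 := by
  decide

theorem PeriodicWindow.length_lt_of_dejean {w : List (Fin 3)} {s p q : ℕ}
    (h : PeriodicWindow (dejean w) s p q) (hq : ¬ 19 ∣ q) : p < q + 10 := by
  by_contra! hp
  obtain ⟨j, hj, hu, hu', hne⟩ :=
    exists_dejeanBlock_step_ne (q % 19) (by omega) (by omega) (s % 19) (by omega)
  have h1 := h.dejean_letter_eq (b := (s + j) / 19) (u := (s % 19 + j) % 19)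
    (b' := (s + j + q) / 19) (u' := (s % 19 + j + q % 19) % 19)
    (by omega) (by omega) (by omega) (by omega) (by omega)
  have h2 := h.dejean_letter_eq (b := (s + j) / 19) (u := (s % 19 + j) % 19 + 1)
    (b' := (s + j + q) / 19) (u' := (s % 19 + j + q % 19) % 19 + 1)
    (by omega) (by omega) (by omega) (by omega) (by omega)
  -- the letters of `w` cancel in the difference of two neighbours inside one block
  exact hne (by open Fin.CommRing in linear_combination h2 - h1)

def shortFactors : List (List (Fin 3)) := [
  [], [0], [1], [2],
  [0, 1], [0, 2], [1, 0], [1, 2], [2, 0], [2, 1],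
  [0, 1, 0], [0, 1, 2], [0, 2, 0], [0, 2, 1], [1, 0, 1], [1, 0, 2],
  [1, 2, 0], [1, 2, 1], [2, 0, 1], [2, 0, 2], [2, 1, 0], [2, 1, 2],
  [0, 1, 0, 2], [0, 1, 2, 0], [0, 1, 2, 1], [0, 2, 0, 1], [0, 2, 1, 0],
  [0, 2, 1, 2], [1, 0, 1, 2], [1, 0, 2, 0], [1, 0, 2, 1], [1, 2, 0, 1],
  [1, 2, 0, 2], [1, 2, 1, 0], [2, 0, 1, 0], [2, 0, 1, 2], [2, 0, 2, 1],
  [2, 1, 0, 1], [2, 1, 0, 2], [2, 1, 2, 0]]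

def ShortFactorsListed (w : List (Fin 3)) : Prop :=
  ∀ s L, L ≤ 4 → s + L ≤ w.length → (w.drop s).take L ∈ shortFactors

theorem shortFactorsListed_zero : ShortFactorsListed [0] := by
  intro s L _ h
  obtain rfl | ⟨rfl, rfl⟩ : L = 0 ∨ s = 0 ∧ L = 1 := by
    simp only [List.length_singleton] at h; omega
  · rw [List.take_zero]; decide
  · decide

theorem drop_take_dejean_mem_shortFactors : ∀ v ∈ shortFactors, v.length ≤ 2 →
    ∀ k < 39, ∀ L < 5, ((dejean v).drop k).take L ∈ shortFactors := by
  decide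

theorem shortFactorsListed_dejean {w : List (Fin 3)} (hw : ShortFactorsListed w) :
    ShortFactorsListed (dejean w) := by
  intro s L hL hsL
  rw [length_dejean] at hsL
  set j := s / 19
  set m := (s + L + 18) / 19 - j
  have hv := hw j m (by omega) (by omega)
  have hvlen : ((w.drop j).take m).length ≤ 2 := by
    simp only [List.length_take, List.length_drop]; omega
  have := drop_take_dejean_mem_shortFactors _ hv hvlen (s - 19 * j) (by omega) L (by omega)
  rwa [dejean_drop_take, List.take_drop_take_drop _ (by omega) (by omega)] at this

set_option maxHeartbeats 1600000 in
theorem exists_ne_of_short_window : ∀ v ∈ shortFactors, v.length ≤ 2 →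
    ∀ q : Fin 12, ∀ p : Fin 21, ∀ k : Fin 19,
    1 ≤ (q : ℕ) → (q : ℕ) < p → (p : ℕ) ≤ q + 9 → 7 * (q : ℕ) < 4 * p →
      (k : ℕ) + p ≤ (dejean v).length →
    ∃ i < (p : ℕ), i + q < p ∧ (dejean v)[k + i]? ≠ (dejean v)[k + i + q]? := by
  decide

theorem PeriodicWindow.not_short_of_dejean {w : List (Fin 3)} (hw : ShortFactorsListed w)
    {s p q : ℕ} (h : PeriodicWindow (dejean w) s p q) (hq : 0 < q) (hqp : 7 * q < 4 * p)
    (hp : p < q + 10) : False := by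
  have hlen := h.1
  rw [length_dejean] at hlen
  set j := s / 19
  set m := (s + p + 18) / 19 - j
  have hv := hw j m (by omega) (by omega)
  have hvlen : ((w.drop j).take m).length = m := by
    simp only [List.length_take, List.length_drop]; omega
  have hwin := h.drop_take (a := 19 * j) (b := 19 * m) (by omega) (by omega)
  rw [← dejean_drop_take] at hwin
  obtain ⟨i, -, hi, hne⟩ := exists_ne_of_short_window _ hv (by omega)
    ⟨q, by omega⟩ ⟨p, by omega⟩ ⟨s - 19 * j, by omega⟩
    hq (show q < p by omega) (show p ≤ q + 9 by omega) hqp hwin.1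
  simp only at hi hne
  exact hne (hwin.2 _ (by omega) (by omega))

theorem not_containsPowGt_dejean {w : List (Fin 3)} (hw : ShortFactorsListed w)
    (hfree : ¬ ContainsPowGt w (7 / 4)) : ¬ ContainsPowGt (dejean w) (7 / 4) := by
  rw [containsPowGt_seven_fourths_iff] at hfree ⊢
  rintro ⟨s, p, q, hq, hqp, h⟩
  by_cases h19 : 19 ∣ q
  · exact hfree ⟨_, _, _, by omega, by omega, h.of_dejean (by omega) h19⟩
  · exact h.not_short_of_dejean hw hq hqp (h.length_lt_of_dejean h19)

theorem length_iterate_dejean (n : ℕ) (w : List (Fin 3)) :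
    (dejean^[n] w).length = 19 ^ n * w.length := by
  induction n generalizing w with
  | zero => simp
  | succ n ih => rw [Function.iterate_succ_apply, ih, length_dejean, pow_succ, Nat.mul_assoc]

theorem reverse_iterate_dejean (n : ℕ) {w : List (Fin 3)} (hw : w.reverse = w) :
    (dejean^[n] w).reverse = dejean^[n] w := by
  rw [((Function.Commute.iterate_right reverse_dejean n).eq w : _), hw]

theorem not_containsPowGt_iterate_dejean (n : ℕ) {w : List (Fin 3)} (hw : ShortFactorsListed w)
    (hfree : ¬ ContainsPowGt w (7 / 4)) : ¬ ContainsPowGt (dejean^[n] w) (7 / 4) := by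
  induction n generalizing w with
  | zero => exact hfree
  | succ n ih =>
    rw [Function.iterate_succ_apply]
    exact ih (shortFactorsListed_dejean hw) (not_containsPowGt_dejean hw hfree)

theorem dejean_iterate_palindrome_avoids_general (n : ℕ) :
    ((dejean^[n]) [0]).reverse = (dejean^[n]) [0] ∧
    ((dejean^[n]) [0]).length = 19 ^ n ∧
    ¬ ContainsPowGt ((dejean^[n]) [0]) (7 / 4) :=
  ⟨reverse_iterate_dejean n rfl, by rw [length_iterate_dejean, List.length_singleton, mul_one],
    not_containsPowGt_iterate_dejean n shortFactorsListed_zero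
      (not_containsPowGt_singleton 0 (by norm_num))⟩

theorem dejean_iterate_palindrome_avoids (n : ℕ) (hn : 1 ≤ n) :
    ((dejean^[n]) [0]).reverse = (dejean^[n]) [0] ∧
    ((dejean^[n]) [0]).length = 19 ^ n ∧
    ¬ ContainsPowGt ((dejean^[n]) [0]) (7 / 4) :=
  dejean_iterate_palindrome_avoids_general n
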